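/- arXiv:1207.4436 — 3 statements merged into one kernel-verified Lean document; each statement's English description precedes it below -/
import Mathlib

section
/- Let A be an M×M matrix over a field (e.g. ℂ) whose columns each sum to zero, i.e. eᵀA = 0. Then the characteristic polynomial of A factors as charpoly(A) = X · charpoly(J A H), where J A H is the (M−1)×(M−1) reduced matrix. -/
/-!
Stack `J` over the row `eᵀ` into a square matrix `P`, and `H` beside the last unit column `u` into
`Q`. Then `P * Q = 1`, and since `eᵀ A = 0` the conjugate `P * A * Q` is block upper triangular
with diagonal blocks `J * A * H` and the `1 × 1` zero matrix, whose characteristic polynomial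
is `X`.
-/

open Matrix

/-- The all-but-last-row identity matrix `J` (size `(M-1) × M`), over `ℂ`. -/
noncomputable def J (M : ℕ) : Matrix (Fin (M - 1)) (Fin M) ℂ :=
  Matrix.of fun i j => if (i : ℕ) = (j : ℕ) then 1 else 0

/-- The matrix `H` (size `M × (M-1)`): identity on top, last row all `-1`, over `ℂ`. -/
noncomputable def H (M : ℕ) : Matrix (Fin M) (Fin (M - 1)) ℂ :=
  Matrix.of fun i j => if (i : ℕ) = (j : ℕ) then 1 else if (i : ℕ) = M - 1 then -1 else 0

/-- The all-ones vector `e = (1,...,1)ᵀ`. -/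
noncomputable def eVec (M : ℕ) : Fin M → ℂ := fun _ => 1

open Polynomial

theorem Matrix.charpoly_eq_X_mul_charpoly_of_vecMul_eq_zero {R ι κ : Type*} [CommRing R]
    [Fintype ι] [DecidableEq ι] [Fintype κ] [DecidableEq κ]
    {A : Matrix ι ι R} {J : Matrix κ ι R} {H : Matrix ι κ R} {v u : ι → R}
    (hcard : Fintype.card ι = Fintype.card κ + 1)
    (hinv : fromRows J (replicateRow Unit v) * fromCols H (replicateCol Unit u) = 1)
    (hA : v ᵥ* A = 0) :
    A.charpoly = X * (J * A * H).charpoly := by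
  set P := fromRows J (replicateRow Unit v)
  set Q := fromCols H (replicateCol Unit u)
  have hcard' : Fintype.card (κ ⊕ Unit) = Fintype.card ι := by simp [hcard]
  have hQP : Q * P = 1 := (mul_eq_one_comm_of_card_eq _ _ R hcard').mp hinv
  have hconj : (P * A * Q).charpoly = A.charpoly := by
    rw [Matrix.mul_assoc, charpoly_mul_comm_of_le _ _ hcard'.ge, Matrix.mul_assoc, hQP,
      Matrix.mul_one, hcard', Nat.sub_self, pow_zero, one_mul]
  have hblocks : P * A * Q = fromBlocks (J * A * H) (J * A * replicateCol Unit u) 0 0 := by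
    rw [fromRows_mul, fromRows_mul_fromCols, ← replicateRow_vecMul, hA]
    simp
  rw [← hconj, hblocks, charpoly_fromBlocks_zero₂₁, charpoly_zero, Fintype.card_unit, pow_one,
    mul_comm]

lemma J_mul_H (M : ℕ) : _root_.J M * H M = 1 := by
  ext i j
  rw [mul_apply, Finset.sum_eq_single ⟨i, by omega⟩]
  · simp [_root_.J, H, one_apply, Fin.ext_iff, i.isLt.ne]
  · intro k _ hk
    rw [Fin.ne_iff_vne] at hk
    simp [_root_.J, Ne.symm hk]
  · simp

lemma J_mulVec_single_last {M : ℕ} (hM : 0 < M) :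
    _root_.J M *ᵥ Pi.single ⟨M - 1, Nat.sub_lt hM one_pos⟩ 1 = 0 := by
  ext i
  simp [_root_.J, i.isLt.ne]

lemma eVec_vecMul_H (M : ℕ) : eVec M ᵥ* H M = 0 := by
  ext j
  have hj := j.isLt
  rw [vecMul, dotProduct,
    Finset.sum_eq_add ⟨j, by omega⟩ ⟨M - 1, by omega⟩ (by simp [Fin.ext_iff, hj.ne])]
  · simp [eVec, H, hj.ne']
  · intro k _ hk
    simp only [ne_eq, Fin.ext_iff] at hk
    simp [H, hk]
  all_goals simp

lemma fromRows_J_eVec_mul_fromCols_H_single_last {M : ℕ} (hM : 0 < M) :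
    fromRows (_root_.J M) (replicateRow Unit (eVec M)) *
      fromCols (H M) (replicateCol Unit (Pi.single ⟨M - 1, Nat.sub_lt hM one_pos⟩ 1)) = 1 := by
  rw [fromRows_mul_fromCols, J_mul_H, ← replicateCol_mulVec, J_mulVec_single_last hM,
    ← replicateRow_vecMul, eVec_vecMul_H, replicateRow_mul_replicateCol, ← fromBlocks_one]
  congr 1
  ext
  simp [eVec]

theorem stmt1 (M : ℕ) (hM : 2 ≤ M) (A : Matrix (Fin M) (Fin M) ℂ)
    (hA : eVec M ᵥ* A = 0) :
    A.charpoly = Polynomial.X * (J M * A * H M).charpoly :=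
  charpoly_eq_X_mul_charpoly_of_vecMul_eq_zero (by simp only [Fintype.card_fin]; omega)
    (fromRows_J_eVec_mul_fromCols_H_single_last (by omega)) hA
end

section
/- Let A be an M×M complex matrix with eᵀA = 0, and set Ã = J A H. Then every nonzero λ ∈ ℂ is an eigenvalue of Ã if and only if it is an eigenvalue of A, with the same algebraic multiplicity; moreover the algebraic multiplicity of the eigenvalue 0 of Ã equals the algebraic multiplicity of the eigenvalue 0 of A minus one. In particular, the eigenvalues of Ã are exactly the eigenvalues of A with one copy of the zero eigenvalue removed. -/
open Matrix

open Polynomial Finset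

/-- Row-operation matrix: identity except last row is all ones. -/
noncomputable def Emat (m : ℕ) : Matrix (Fin (m+1)) (Fin (m+1)) ℂ[X] :=
  Matrix.of fun i j => if i = Fin.last m then 1 else if i = j then 1 else 0

/-- Column-operation matrix: identity except last row is `-1` off the diagonal. -/
noncomputable def Fmat (m : ℕ) : Matrix (Fin (m+1)) (Fin (m+1)) ℂ[X] :=
  Matrix.of fun i j => if i = j then 1 else if i = Fin.last m then -1 else 0

lemma Emat_blockTriangular (m : ℕ) : (Emat m).BlockTriangular OrderDual.toDual := by
  intro i j hij
  simp only [OrderDual.toDual_lt_toDual] at hij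
  have h1 : i ≠ Fin.last m := (hij.trans_le (Fin.le_last j)).ne
  simp [Emat, h1, hij.ne]

lemma Fmat_blockTriangular (m : ℕ) : (Fmat m).BlockTriangular OrderDual.toDual := by
  intro i j hij
  simp only [OrderDual.toDual_lt_toDual] at hij
  have h1 : i ≠ Fin.last m := (hij.trans_le (Fin.le_last j)).ne
  simp [Fmat, h1, hij.ne]

lemma det_Emat (m : ℕ) : (Emat m).det = 1 := by
  rw [Matrix.det_of_lowerTriangular _ (Emat_blockTriangular m)]
  apply Finset.prod_eq_one
  intro i _
  simp only [Emat, Matrix.of_apply]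
  split_ifs <;> simp

lemma det_Fmat (m : ℕ) : (Fmat m).det = 1 := by
  rw [Matrix.det_of_lowerTriangular _ (Fmat_blockTriangular m)]
  apply Finset.prod_eq_one
  intro i _
  simp only [Fmat, Matrix.of_apply]
  split_ifs <;> simp

lemma Emat_mul_apply (m : ℕ) (Mtx : Matrix (Fin (m+1)) (Fin (m+1)) ℂ[X]) (i k : Fin (m+1)) :
    (Emat m * Mtx) i k = if i = Fin.last m then ∑ j, Mtx j k else Mtx i k := by
  rw [Matrix.mul_apply]
  split_ifs with h
  · subst h
    simp [Emat]
  · simp [Emat, h]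

lemma mul_Fmat_apply (m : ℕ) (Mtx : Matrix (Fin (m+1)) (Fin (m+1)) ℂ[X]) (i k : Fin (m+1)) :
    (Mtx * Fmat m) i k =
      if k = Fin.last m then Mtx i k else Mtx i k - Mtx i (Fin.last m) := by
  have hF : ∀ l k : Fin (m+1), Fmat m l k =
      (if l = k then 1 else 0) + (if l = Fin.last m ∧ ¬ k = Fin.last m then -1 else 0) := by
    intro l k
    simp only [Fmat, Matrix.of_apply]
    by_cases h1 : l = k <;> by_cases h2 : l = Fin.last m <;>
      by_cases h3 : k = Fin.last m <;> simp_all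
  rw [Matrix.mul_apply]
  simp_rw [hF, mul_add, Finset.sum_add_distrib, mul_ite, mul_one, mul_zero, mul_neg,
    Finset.sum_ite_eq', Finset.mem_univ, if_true]
  by_cases hk : k = Fin.last m <;> simp [hk, sub_eq_add_neg]

lemma JA_apply (m : ℕ) (A : Matrix (Fin (m+1)) (Fin (m+1)) ℂ) (i : Fin m) (k : Fin (m+1)) :
    (_root_.J (m+1) * A) i k = A i.castSucc k := by
  rw [Matrix.mul_apply]
  rw [Finset.sum_eq_single i.castSucc]
  · simp [_root_.J]
  · intro l _ hl
    have h : ¬((i : ℕ) = (l : ℕ)) := fun h => hl (Fin.ext (by simp [← h]))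
    simp [_root_.J, h]
  · simp

lemma mul_H_apply (m : ℕ) (Cc : Matrix (Fin m) (Fin (m+1)) ℂ) (i : Fin m) (j : Fin m) :
    (Cc * H (m+1)) i j = Cc i j.castSucc - Cc i (Fin.last m) := by
  have hH : ∀ (l : Fin (m+1)) (j : Fin m), H (m+1) l j =
      (if l = j.castSucc then 1 else 0) + (if l = Fin.last m then -1 else 0) := by
    intro l j
    have hj : (j : ℕ) < m := j.isLt
    simp only [H, Matrix.of_apply, Nat.add_sub_cancel, Fin.ext_iff, Fin.coe_castSucc,
      Fin.val_last]
    by_cases hc1 : (l : ℕ) = (j : ℕ)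
    · have hc2 : ¬ (l : ℕ) = m := by omega
      have hjm : ¬ (j : ℕ) = m := by omega
      simp [hc1, hc2, hjm]
    · by_cases hc2 : (l : ℕ) = m
      · have hjm : ¬ (m : ℕ) = (j : ℕ) := by omega
        simp [hc1, hc2, hjm]
      · simp [hc1, hc2]
  rw [Matrix.mul_apply]
  simp_rw [hH, mul_add, Finset.sum_add_distrib, mul_ite, mul_one, mul_zero, mul_neg,
    Finset.sum_ite_eq', Finset.mem_univ, if_true]
  ring

lemma key (m : ℕ) (A : Matrix (Fin (m+1)) (Fin (m+1)) ℂ)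
    (hA : ∀ k, ∑ j, A j k = 0) :
    A.charpoly = X * (_root_.J (m+1) * A * H (m+1)).charpoly := by
  have hBapp : ∀ i j : Fin m, (_root_.J (m+1) * A * H (m+1)) i j =
      A i.castSucc j.castSucc - A i.castSucc (Fin.last m) := by
    intro i j
    rw [mul_H_apply m (_root_.J (m+1) * A), JA_apply, JA_apply]
  set N : Matrix (Fin (m+1)) (Fin (m+1)) ℂ[X] := Emat m * charmatrix A with hN
  set G : Matrix (Fin (m+1)) (Fin (m+1)) ℂ[X] := N * Fmat m with hG
  have hdetG : G.det = A.charpoly := by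
    rw [hG, hN, Matrix.det_mul, Matrix.det_mul, det_Emat, det_Fmat, one_mul, mul_one,
      Matrix.charpoly]
  have hNlast : ∀ k, N (Fin.last m) k = X := by
    intro k
    rw [hN, Emat_mul_apply, if_pos rfl]
    have : ∀ j : Fin (m+1), charmatrix A j k = (if j = k then X else 0) - C (A j k) := by
      intro j; rw [charmatrix_apply, Matrix.diagonal_apply]
    simp_rw [this, Finset.sum_sub_distrib, Finset.sum_ite_eq', Finset.mem_univ, if_true,
      ← map_sum, hA k, map_zero, sub_zero]
  have hNi : ∀ i k, i ≠ Fin.last m → N i k = charmatrix A i k := by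
    intro i k h
    rw [hN, Emat_mul_apply, if_neg h]
  have hGlastlast : G (Fin.last m) (Fin.last m) = X := by
    rw [hG, mul_Fmat_apply, if_pos rfl, hNlast]
  have hGlast : ∀ j : Fin (m+1), j ≠ Fin.last m → G (Fin.last m) j = 0 := by
    intro j hj
    rw [hG, mul_Fmat_apply, if_neg hj, hNlast, hNlast, sub_self]
  have hGsub : ∀ i j : Fin m, G i.castSucc j.castSucc =
      charmatrix (_root_.J (m+1) * A * H (m+1)) i j := by
    intro i j
    have hi : i.castSucc ≠ Fin.last m := (Fin.castSucc_lt_last i).ne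
    have hj : j.castSucc ≠ Fin.last m := (Fin.castSucc_lt_last j).ne
    rw [hG, mul_Fmat_apply, if_neg hj, hNi _ _ hi, hNi _ _ hi]
    simp only [charmatrix_apply, Matrix.diagonal_apply, Fin.castSucc_inj, if_neg hi,
      hBapp, map_sub]
    ring
  have hexp := Matrix.det_succ_row G (Fin.last m)
  rw [Finset.sum_eq_single (Fin.last m)] at hexp
  · rw [hGlastlast] at hexp
    have hpow : ((-1 : ℂ[X]) ^ ((Fin.last m : ℕ) + (Fin.last m : ℕ))) = 1 :=
      Even.neg_one_pow ⟨(Fin.last m : ℕ), by ring⟩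
    rw [hpow, one_mul] at hexp
    have hsub : G.submatrix (Fin.last m).succAbove (Fin.last m).succAbove =
        charmatrix (_root_.J (m+1) * A * H (m+1)) := by
      apply Matrix.ext
      intro i j
      simp only [Matrix.submatrix_apply, Fin.succAbove_last]
      exact hGsub i j
    rw [hsub] at hexp
    rw [← hdetG, hexp]
    rfl
  · intro j _ hj
    rw [hGlast j hj, mul_zero, zero_mul]
  · intro h
    exact absurd (Finset.mem_univ _) h

theorem stmt2 (M : ℕ) (hM : 2 ≤ M) (A : Matrix (Fin M) (Fin M) ℂ)
    (hA : eVec M ᵥ* A = 0) :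
    (∀ μ : ℂ, μ ≠ 0 →
      (J M * A * H M).charpoly.rootMultiplicity μ = A.charpoly.rootMultiplicity μ) ∧
    A.charpoly.rootMultiplicity 0 = (J M * A * H M).charpoly.rootMultiplicity 0 + 1 := by
  obtain ⟨m, rfl⟩ : ∃ m, M = m + 1 := ⟨M - 1, by omega⟩
  have hA' : ∀ k, ∑ j, A j k = 0 := by
    intro k
    have := congrFun hA k
    simpa [Matrix.vecMul, dotProduct, eVec] using this
  have hch := key m A hA'
  have hne : (_root_.J (m+1) * A * H (m+1)).charpoly ≠ 0 := (Matrix.charpoly_monic _).ne_zero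
  have hXne : (X : ℂ[X]) ≠ 0 := X_ne_zero
  constructor
  · intro μ hμ
    have hXroot : rootMultiplicity μ (X : ℂ[X]) = 0 :=
      Polynomial.rootMultiplicity_eq_zero (by simp [Polynomial.IsRoot, hμ])
    rw [hch, Polynomial.rootMultiplicity_mul (mul_ne_zero hXne hne), hXroot, zero_add]
  · rw [hch, Polynomial.rootMultiplicity_mul (mul_ne_zero hXne hne)]
    have hX : rootMultiplicity (0 : ℂ) X = 1 := by
      simpa using Polynomial.rootMultiplicity_X_sub_C_self (x := (0 : ℂ))
    rw [hX, add_comm]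
end

section
/- Let A be an M×M complex matrix with eᵀA = 0 such that 0 is an algebraically simple eigenvalue of A (a root of multiplicity exactly one of the characteristic polynomial of A). Then the reduced matrix Ã = J A H is non-singular, i.e. invertible. -/
open Matrix

/-!
Conjugating by `S = 1 + lastRowShear`, the hypothesis `eᵀA = 0` makes the last row of `S A S⁻¹`
vanish, while its leading `(M-1) × (M-1)` block is `J A H`: the rows of `S` above the last are
those of `J`, and the first `M-1` columns of `S⁻¹` are those of `H`. Expanding along the zero row,
`charpoly A = X · charpoly (J A H)`; since `0` is a simple root of the left side, it is not a root
of `charpoly (J A H)`, whose constant term is `± det (J A H)`.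
-/

open Polynomial

theorem Polynomial.rootMultiplicity_zero_X_mul {R : Type*} [CommRing R] {p : R[X]} (hp : p ≠ 0) :
    (X * p).rootMultiplicity 0 = p.rootMultiplicity 0 + 1 := by
  simpa [mul_comm] using rootMultiplicity_mul_X_sub_C_pow (a := 0) (n := 1) hp

namespace Matrix

variable {R : Type*} [CommRing R] {m : Type*} [Fintype m] [DecidableEq m]

theorem charpoly_mul_mul_of_mul_eq_one {P Q : Matrix m m R} (hQP : Q * P = 1) (A : Matrix m m R) :
    (P * A * Q).charpoly = A.charpoly := by
  rw [charpoly_mul_comm, ← Matrix.mul_assoc, hQP, Matrix.one_mul]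

theorem one_sub_vecMulVec_mul_one_add_vecMulVec {u v : m → R} (h : v ⬝ᵥ u = 0) :
    (1 - vecMulVec u v) * (1 + vecMulVec u v) = 1 := by
  rw [sub_mul, mul_add, mul_add, vecMulVec_mul_vecMulVec, h]
  simp

theorem isUnit_iff_rootMultiplicity_charpoly_eq_zero {K : Type*} [Field K] (B : Matrix m m K) :
    IsUnit B ↔ B.charpoly.rootMultiplicity 0 = 0 := by
  simp [isUnit_iff_isUnit_det, det_eq_sign_charpoly_coeff, coeff_zero_eq_eval_zero,
    B.charpoly_monic.ne_zero]

theorem charmatrix_submatrix {l : Type*} [Fintype l] [DecidableEq l] (N : Matrix m m R)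
    {e : l → m} (he : Function.Injective e) :
    N.charmatrix.submatrix e e = (N.submatrix e e).charmatrix := by
  ext i j
  by_cases h : i = j
  · subst h; simp [charmatrix_apply_eq]
  · simp [charmatrix_apply_ne, h, he.ne h]

variable {n : ℕ}

theorem charpoly_eq_X_mul_charpoly_submatrix_castSucc {N : Matrix (Fin (n + 1)) (Fin (n + 1)) R}
    (h : N (Fin.last n) = 0) :
    N.charpoly = X * (N.submatrix Fin.castSucc Fin.castSucc).charpoly := by
  rw [charpoly, det_succ_row _ (Fin.last n), Fin.sum_univ_castSucc]
  simp [h, charmatrix_submatrix _ (Fin.castSucc_injective n), charpoly,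
    (Fin.castSucc_ne_last _).symm]

/-- `1 + lastRowShear n` adds all other rows to the last row; `1 - lastRowShear n` undoes it. -/
def lastRowShear (n : ℕ) : Matrix (Fin (n + 1)) (Fin (n + 1)) R :=
  vecMulVec (Pi.single (Fin.last n) 1) (1 - Pi.single (Fin.last n) 1)

theorem one_sub_lastRowShear_mul_one_add_lastRowShear :
    (1 - lastRowShear n : Matrix _ _ R) * (1 + lastRowShear n) = 1 :=
  one_sub_vecMulVec_mul_one_add_vecMulVec (by simp [dotProduct_single])

theorem one_add_lastRowShear_last_row : (1 + lastRowShear n : Matrix _ _ R) (Fin.last n) = 1 := by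
  ext j
  by_cases h : Fin.last n = j <;> simp [lastRowShear, vecMulVec_apply, h]

end Matrix

theorem submatrix_one_add_lastRowShear (n : ℕ) :
    (1 + lastRowShear n : Matrix _ _ ℂ).submatrix Fin.castSucc id = _root_.J (n + 1) := by
  ext i j
  have hi : (i : ℕ) < n := i.isLt
  simp [_root_.J, lastRowShear, vecMulVec_apply, one_apply, Fin.ext_iff, hi.ne]

theorem submatrix_one_sub_lastRowShear (n : ℕ) :
    (1 - lastRowShear n : Matrix _ _ ℂ).submatrix id Fin.castSucc = H (n + 1) := by
  ext k j
  have hj : (j : ℕ) < n := j.isLt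
  induction k using Fin.lastCases with
  | last => simp [H, lastRowShear, vecMulVec_apply, one_apply, Fin.ext_iff, hj.ne']
  | cast k => simp [H, lastRowShear, vecMulVec_apply, one_apply, Fin.ext_iff, k.isLt.ne]

theorem stmt4 (M : ℕ) (hM : 2 ≤ M) (A : Matrix (Fin M) (Fin M) ℂ)
    (hA : eVec M ᵥ* A = 0)
    (h0 : A.charpoly.rootMultiplicity 0 = 1) :
    IsUnit (J M * A * H M) := by
  obtain ⟨n, rfl⟩ : ∃ n, M = n + 1 := ⟨M - 1, by omega⟩
  set N := (1 + lastRowShear n) * A * (1 - lastRowShear n)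
  have hN : N.charpoly = A.charpoly :=
    charpoly_mul_mul_of_mul_eq_one one_sub_lastRowShear_mul_one_add_lastRowShear A
  have hlast : N (Fin.last n) = 0 := by
    have hrow : (1 + lastRowShear n : Matrix _ _ ℂ) (Fin.last n) = eVec (n + 1) :=
      one_add_lastRowShear_last_row
    simp only [N, mul_apply_eq_vecMul, hrow, hA, zero_vecMul]
  have hblock : N.submatrix Fin.castSucc Fin.castSucc = _root_.J (n + 1) * A * H (n + 1) := by
    rw [← submatrix_one_add_lastRowShear, ← submatrix_one_sub_lastRowShear,
      submatrix_mul _ _ _ id _ Function.bijective_id,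
      submatrix_mul _ _ _ id _ Function.bijective_id, submatrix_id_id]
  rw [← hN, charpoly_eq_X_mul_charpoly_submatrix_castSucc hlast, hblock,
    rootMultiplicity_zero_X_mul (charpoly_monic _).ne_zero] at h0
  exact (isUnit_iff_rootMultiplicity_charpoly_eq_zero _).mpr (by omega)
end
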